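/- For n > k ≥ 2, let M' = { z ∪ {n} : z ⊆ [n−1], |z| = k−1 } and let M ⊇ M' be any family of k-subsets of [n] such that every x ∈ M \ M' does not contain n. Then there is a cyclic enumeration y_1, ..., y_m of M such that |y_i \ y_{i+1}| ≤ 2 for all i (indices mod m). -/

import Mathlib

namespace Stmt11

def Adj (x y : Finset ℕ) : Prop := (x \ y).card ≤ 2

lemma pack (M : Finset (Finset ℕ)) (l : List (Finset ℕ)) (hne : l ≠ [])
    (hnd : l.Nodup) (hmem : ∀ x, x ∈ l ↔ x ∈ M)
    (hch : l.Chain' Adj) (hcyc : Adj (l.getLast hne) (l.head hne)) :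
    ∃ y : ZMod M.card → Finset ℕ,
      (∀ i, y i ∈ M) ∧ Function.Injective y ∧ (∀ x ∈ M, ∃ i, y i = x) ∧
      ∀ i, ((y i) \ (y (i + 1))).card ≤ 2 := by
  classical
  have hl : l.toFinset = M := by
    ext x; simp [hmem]
  have hcard : M.card = l.length := by
    rw [← hl, List.toFinset_card_of_nodup hnd]
  have hpos : 0 < l.length := List.length_pos_iff.2 hne
  have hMpos : 0 < M.card := hcard ▸ hpos
  haveI : NeZero M.card := ⟨by omega⟩
  set m := M.card with hm
  have hvlt : ∀ i : ZMod m, i.val < l.length := fun i => hcard ▸ ZMod.val_lt i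
  refine ⟨fun i => l.getD i.val ∅, ?_, ?_, ?_, ?_⟩
  · intro i
    show l.getD i.val ∅ ∈ M
    rw [← hmem, List.getD_eq_getElem l ∅ (hvlt i)]
    exact List.getElem_mem _
  · intro i j hij
    simp only at hij
    rw [List.getD_eq_getElem l ∅ (hvlt i), List.getD_eq_getElem l ∅ (hvlt j)] at hij
    exact ZMod.val_injective m ((List.Nodup.getElem_inj_iff hnd).mp hij)
  · intro x hx
    obtain ⟨idx, hidx, hget⟩ := List.getElem_of_mem ((hmem x).mpr hx)
    refine ⟨(idx : ZMod m), ?_⟩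
    show l.getD ((idx : ZMod m)).val ∅ = x
    have : ((idx : ZMod m)).val = idx := ZMod.val_natCast_of_lt (by omega)
    rw [this, List.getD_eq_getElem l ∅ (by omega)]
    exact hget
  · intro i
    show ((l.getD i.val ∅) \ (l.getD (i+1).val ∅)).card ≤ 2
    have hv1 : (i + 1 : ZMod m).val = (i.val + 1) % m := by
      rw [ZMod.val_add, ZMod.val_one_eq_one_mod]
      conv_rhs => rw [Nat.add_mod]
      simp [Nat.mod_mod_of_dvd]
    have hiv := hvlt i
    rw [List.getD_eq_getElem l ∅ (hvlt i), List.getD_eq_getElem l ∅ (hvlt (i+1))]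
    by_cases hc : i.val + 1 < m
    · have h2 : (i+1 : ZMod m).val = i.val + 1 := by rw [hv1, Nat.mod_eq_of_lt hc]
      have := List.isChain_iff_getElem.mp hch i.val (by omega)
      simpa [h2, Adj] using this
    · have hm1 : i.val + 1 = m := by omega
      have h2 : (i+1 : ZMod m).val = 0 := by rw [hv1, hm1]; simp
      have hlast : l.getLast hne = l[l.length - 1] := List.getLast_eq_getElem hne
      have hhead : l.head hne = l[0] := List.head_eq_getElem hne
      have hx : i.val = l.length - 1 := by omega
      unfold Adj at hcyc
      rw [hlast, hhead] at hcyc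
      simp only [h2, hx]
      exact hcyc

end Stmt11


namespace Stmt11

open Finset

/-- symmetric "one swap" relation -/
def S (x y : Finset ℕ) : Prop := (x \ y).card ≤ 1 ∧ (y \ x).card ≤ 1

def gray : ℕ → ℕ → List (Finset ℕ)
  | _, 0 => [∅]
  | 0, _+1 => []
  | m+1, j+1 => gray m (j+1) ++ ((gray m j).map (insert (m+1))).reverse

lemma gray_toFinset : ∀ m j, (gray m j).toFinset = (Icc 1 m).powersetCard j := by
  intro m
  induction m with
  | zero =>
    intro j
    cases j with
    | zero => simp [gray]
    | succ j =>
      have : powersetCard (j+1) (Icc 1 0) = ∅ := by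
        rw [Finset.powersetCard_eq_empty]; simp
      simpa [gray] using this.symm
  | succ m ih =>
    intro j
    cases j with
    | zero => simp [gray]
    | succ j =>
      have hins : Icc 1 (m+1) = insert (m+1) (Icc 1 m) := by
        ext a; simp [Finset.mem_Icc, Finset.mem_insert]; omega
      have hnotmem : (m+1) ∉ Icc 1 m := by simp
      rw [gray, List.toFinset_append, List.toFinset_reverse]
      have hmap : (List.map (insert (m+1)) (gray m j)).toFinset
          = (gray m j).toFinset.image (insert (m+1)) := by
        ext a; simp [List.mem_map]
      rw [hmap]
      rw [ih, ih, hins, Finset.powersetCard_succ_insert hnotmem]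

lemma gray_mem_subset {m j : ℕ} {x : Finset ℕ} (hx : x ∈ gray m j) :
    x ⊆ Icc 1 m ∧ x.card = j := by
  have : x ∈ (Icc 1 m).powersetCard j := by
    rw [← gray_toFinset]; exact List.mem_toFinset.mpr hx
  simpa [Finset.mem_powersetCard] using this

lemma gray_nodup : ∀ m j, (gray m j).Nodup := by
  intro m
  induction m with
  | zero => intro j; cases j <;> simp [gray]
  | succ m ih =>
    intro j
    cases j with
    | zero => simp [gray]
    | succ j =>
      rw [gray]
      refine List.Nodup.append (ih _) ((List.nodup_reverse).mpr ?_) ?_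
      · refine (List.Nodup.map_on ?_ (ih j))
        intro x hx y hy hxy
        have hxs := (gray_mem_subset hx).1
        have hys := (gray_mem_subset hy).1
        have hxm : (m+1) ∉ x := fun h => by simpa using hxs h
        have hym : (m+1) ∉ y := fun h => by simpa using hys h
        have := congrArg (fun s => Finset.erase s (m+1)) hxy
        simpa [Finset.erase_insert hxm, Finset.erase_insert hym] using this
      · intro x hx hx2
        simp only [List.mem_reverse, List.mem_map] at hx2
        obtain ⟨z, _, rfl⟩ := hx2
        have hxs := (gray_mem_subset hx).1
        have : (m+1) ∈ Icc 1 m := hxs (Finset.mem_insert_self _ _)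
        simp at this

lemma gray_ne_nil {m j : ℕ} (h : j ≤ m) : gray m j ≠ [] := by
  intro hcon
  have : (∅ : Finset (Finset ℕ)) = (Icc 1 m).powersetCard j := by
    rw [← gray_toFinset, hcon]; simp
  have hcard : ((Icc 1 m).powersetCard j).card = (m.choose j) := by
    rw [Finset.card_powersetCard, Nat.card_Icc]; norm_num
  rw [← this] at hcard
  simp only [Finset.card_empty] at hcard
  have := Nat.choose_pos h
  omega

/-- value of the last element of gray m j -/
def lastVal (m j : ℕ) : Finset ℕ := if j = 0 then ∅ else insert m (Icc 1 (j-1))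

lemma gray_eq_nil : ∀ m j, m < j → gray m j = [] := by
  intro m
  induction m with
  | zero => intro j hj; cases j with
    | zero => omega
    | succ j => rfl
  | succ m ih =>
    intro j hj
    cases j with
    | zero => omega
    | succ j =>
      rw [gray, ih (j+1) (by omega), ih j (by omega)]
      simp

lemma lastVal_self (m : ℕ) : insert (m+1) (lastVal m m) = Icc 1 (m+1) := by
  unfold lastVal
  rcases Nat.eq_zero_or_pos m with h | h
  · subst h; ext a; simp
  · rw [if_neg (by omega)]
    ext a; simp [Finset.mem_Icc]; omega

lemma gray_head_last : ∀ m j, j ≤ m → (gray m j).head? = some (Icc 1 j) ∧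
    (gray m j).getLast? = some (lastVal m j) := by
  intro m
  induction m with
  | zero =>
    intro j hj
    interval_cases j
    constructor <;> simp [gray, lastVal]
  | succ m ih =>
    intro j hj
    cases j with
    | zero => constructor <;> simp [gray, lastVal]
    | succ j =>
      rw [gray]
      by_cases hjm : j + 1 ≤ m
      · have h1 := ih (j+1) hjm
        have h2 := ih j (by omega)
        constructor
        · rw [List.head?_append, h1.1]
          rfl
        · rw [List.getLast?_append, List.getLast?_reverse, List.head?_map, h2.1]
          simp [lastVal]
      · have hjm' : j = m := by omega
        rw [hjm', gray_eq_nil m (m+1) (by omega)]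
        simp only [List.nil_append]
        have h2 := ih m le_rfl
        constructor
        · rw [List.head?_reverse, List.getLast?_map, h2.2]
          simp [lastVal_self]
        · rw [List.getLast?_reverse, List.head?_map, h2.1]
          simp [lastVal]

end Stmt11

namespace Stmt11
open Finset

lemma S_of_subsets {x y : Finset ℕ} {a b : ℕ} (h1 : x \ y ⊆ {a}) (h2 : y \ x ⊆ {b}) :
    S x y := by
  constructor
  · exact le_trans (Finset.card_le_card h1) (by simp)
  · exact le_trans (Finset.card_le_card h2) (by simp)

lemma sdiff_insert_card {x y : Finset ℕ} (a : ℕ) :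
    ((insert a x) \ (insert a y)).card ≤ (x \ y).card := by
  apply Finset.card_le_card
  intro b hb
  simp only [Finset.mem_sdiff, Finset.mem_insert, not_or] at hb ⊢
  obtain ⟨hb1 | hb1, hb2, hb3⟩ := hb
  · exact absurd hb1 hb2
  · exact ⟨hb1, hb3⟩

lemma S_insert {x y : Finset ℕ} (a : ℕ) (h : S x y) : S (insert a x) (insert a y) :=
  ⟨le_trans (sdiff_insert_card a) h.1, le_trans (sdiff_insert_card a) h.2⟩

lemma S_symm {x y : Finset ℕ} (h : S x y) : S y x := ⟨h.2, h.1⟩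

lemma join_S (m j : ℕ) (hj : j + 1 ≤ m) : S (lastVal m (j+1)) (insert (m+1) (lastVal m j)) := by
  unfold lastVal
  rcases Nat.eq_zero_or_pos j with h | h
  · subst h
    simp only [if_neg (by omega : ¬ (0+1 = 0)), if_pos rfl]
    refine S_of_subsets (a := m) (b := m+1) ?_ ?_ <;>
      · intro a ha
        simp only [Finset.mem_sdiff, Finset.mem_insert, Finset.mem_Icc,
          Finset.mem_singleton, Finset.notMem_empty, not_or, or_false, if_true] at ha ⊢
        omega
  · rw [if_neg (by omega : ¬ (j+1 = 0)), if_neg (by omega : ¬ (j = 0))]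
    refine S_of_subsets (a := j) (b := m+1) ?_ ?_ <;>
      · intro a ha
        simp only [Finset.mem_sdiff, Finset.mem_insert, Finset.mem_Icc,
          Finset.mem_singleton, not_or] at ha ⊢
        omega

lemma gray_chain : ∀ m j, (gray m j).Chain' S := by
  intro m
  induction m with
  | zero => intro j; cases j <;> simp [gray, List.Chain']
  | succ m ih =>
    intro j
    cases j with
    | zero => simp [gray, List.Chain']
    | succ j =>
      unfold List.Chain' at ih ⊢
      rw [gray, List.isChain_append]
      refine ⟨ih _, ?_, ?_⟩
      · rw [List.isChain_reverse]
        rw [List.isChain_map]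
        exact (ih j).imp (fun a b h => S_symm (S_insert (m+1) h))
      · intro x hx y hy
        rw [List.head?_reverse, List.getLast?_map] at hy
        -- from hx : x ∈ (gray m (j+1)).getLast?, first part nonempty so j+1 ≤ m
        by_cases hjm : j + 1 ≤ m
        · have h1 := (gray_head_last m (j+1) hjm).2
          have h2 := (gray_head_last m j (by omega)).2
          rw [h1] at hx
          rw [h2] at hy
          simp only [Option.mem_def, Option.some.injEq, Option.map_some] at hx hy
          subst hx
          rw [← hy]
          exact join_S m j hjm
        · rw [gray_eq_nil m (j+1) (by omega)] at hx
          simp at hx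

end Stmt11

namespace Stmt11
open Finset

lemma chain'_flatMap {α β : Type*} (L : List α) (f : α → List β) (R : β → β → Prop)
    (hne : ∀ a ∈ L, f a ≠ [])
    (h1 : ∀ a ∈ L, (f a).Chain' R)
    (h2 : L.Chain' (fun a b => ∀ x ∈ f a, ∀ y ∈ (f b).head?, R x y)) :
    (L.flatMap f).Chain' R := by
  unfold List.Chain' at *
  induction L with
  | nil => simp
  | cons a L ih =>
    rw [List.flatMap_cons, List.isChain_append]
    refine ⟨h1 a (by simp), ih (fun b hb => hne b (by simp [hb]))
      (fun b hb => h1 b (by simp [hb])) h2.tail, ?_⟩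
    intro x hx y hy
    cases L with
    | nil => simp at hy
    | cons b L' =>
      rw [List.flatMap_cons, List.head?_append] at hy
      have hfb : (f b).head? ≠ none := by
        simpa [List.head?_eq_none_iff] using hne b (by simp)
      obtain ⟨w, hw⟩ := Option.ne_none_iff_exists'.mp hfb
      rw [hw] at hy
      simp only [Option.some_or, Option.mem_def, Option.some.injEq] at hy
      subst hy
      have hab := (List.isChain_cons.mp h2).1 b rfl
      exact hab x (List.mem_of_mem_getLast? hx) w hw

lemma getLast?_flatMap' {α β : Type*} (L : List α) (f : α → List β)
    (hL : L ≠ []) (hne : ∀ a ∈ L, f a ≠ []) :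
    (L.flatMap f).getLast? = (f (L.getLast hL)).getLast? := by
  induction L with
  | nil => simp at hL
  | cons a L ih =>
    cases L with
    | nil => simp
    | cons b L' =>
      rw [List.flatMap_cons, List.getLast?_append,
        ih (by simp) (fun c hc => hne c (List.mem_cons_of_mem a hc))]
      have hgl : (a :: b :: L').getLast (by simp) = (b :: L').getLast (by simp) := rfl
      rw [hgl]
      have hfb : (f ((b :: L').getLast (by simp))).getLast? ≠ none := by
        simpa [List.getLast?_eq_none_iff] using hne _ (List.mem_cons_of_mem a (List.getLast_mem _))
      obtain ⟨w, hw⟩ := Option.ne_none_iff_exists'.mp hfb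
      rw [hw]
      rfl

end Stmt11
section Main
open Finset Stmt11

theorem stmt_11 (n k : ℕ) (hk : 2 ≤ k) (hkn : k < n)
    (M' M : Finset (Finset ℕ))
    (hM' : M' = ((Finset.Icc 1 (n - 1)).powersetCard (k - 1)).image (insert n))
    (hsub : M' ⊆ M)
    (hM : ∀ x ∈ M, x ⊆ Finset.Icc 1 n ∧ x.card = k)
    (hnotn : ∀ x ∈ M, x ∉ M' → n ∉ x) :
    ∃ y : ZMod M.card → Finset ℕ,
      (∀ i, y i ∈ M) ∧ Function.Injective y ∧ (∀ x ∈ M, ∃ i, y i = x) ∧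
      ∀ i, ((y i) \ (y (i + 1))).card ≤ 2 := by
  classical
  have hn3 : 3 ≤ n := by omega
  have hjm : k - 1 ≤ n - 1 := by omega
  set L := gray (n-1) (k-1) with hLdef
  set e : Finset ℕ → Finset ℕ := fun x => x.erase (x.sup id) with he
  set fib : Finset ℕ → List (Finset ℕ) :=
    fun z => ((M \ M').filter (fun x => e x = z)).toList with hfibdef
  set blk : Finset ℕ → List (Finset ℕ) := fun z => insert n z :: fib z with hblkdef
  set full := L.flatMap blk with hfulldef
  clear_value L e fib blk full
  -- basic membership facts
  have hfibmem : ∀ z x, x ∈ fib z ↔ (x ∈ M ∧ x ∉ M' ∧ e x = z) := by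
    intro z x
    rw [hfibdef]
    simp only [Finset.mem_toList, Finset.mem_filter, Finset.mem_sdiff, and_assoc]
  have hzL : ∀ z, z ∈ L ↔ (z ⊆ Icc 1 (n-1) ∧ z.card = k-1) := by
    intro z
    rw [← List.mem_toFinset, hLdef, gray_toFinset, Finset.mem_powersetCard]
  have hnIcc : n ∉ Icc 1 (n-1) := by simp [Finset.mem_Icc]; omega
  have hnz : ∀ z ∈ L, n ∉ z := fun z hz hn => hnIcc (((hzL z).mp hz).1 hn)
  have hM'iff : ∀ x, x ∈ M' ↔ ∃ z ∈ L, x = insert n z := by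
    intro x
    rw [hM']
    simp only [Finset.mem_image]
    constructor
    · rintro ⟨z, hz, rfl⟩
      exact ⟨z, (hzL z).mpr (by simpa [Finset.mem_powersetCard] using hz), rfl⟩
    · rintro ⟨z, hz, rfl⟩
      exact ⟨z, by simpa [Finset.mem_powersetCard] using (hzL z).mp hz, rfl⟩
  have hinsM : ∀ z ∈ L, insert n z ∈ M := by
    intro z hz
    exact hsub ((hM'iff _).mpr ⟨z, hz, rfl⟩)
  -- fiber element structure
  have hfibstr : ∀ z x, x ∈ fib z → x ∈ M ∧ n ∉ x ∧ x.sup id ∈ x ∧ e x = z ∧ e x ⊆ x := by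
    intro z x hx
    obtain ⟨hxM, hxM', hex⟩ := (hfibmem z x).mp hx
    have hnx : n ∉ x := hnotn x hxM hxM'
    have hne : x.Nonempty := by
      have := (hM x hxM).2
      exact Finset.card_pos.mp (by omega)
    obtain ⟨i, hi, hsup⟩ := Finset.exists_mem_eq_sup x hne id
    have hsupmem : x.sup id ∈ x := by rw [hsup]; exact hi
    exact ⟨hxM, hnx, hsupmem, hex, by rw [he]; exact Finset.erase_subset _ _⟩
  -- full membership
  have hfullmem : ∀ x, x ∈ full ↔ x ∈ M := by
    intro x
    rw [hfulldef, List.mem_flatMap]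
    constructor
    · rintro ⟨z, hz, hx⟩
      rw [hblkdef] at hx
      rcases List.mem_cons.mp hx with rfl | hx
      · exact hinsM z hz
      · exact ((hfibmem z x).mp hx).1
    · intro hx
      by_cases hx' : x ∈ M'
      · obtain ⟨z, hz, rfl⟩ := (hM'iff x).mp hx'
        exact ⟨z, hz, by rw [hblkdef]; exact List.mem_cons_self⟩
      · refine ⟨e x, ?_, ?_⟩
        · have hnx : n ∉ x := hnotn x hx hx'
          have hsubx : x ⊆ Icc 1 (n-1) := by
            intro a ha
            have := (hM x hx).1 ha
            simp only [Finset.mem_Icc] at this ⊢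
            have : a ≠ n := fun h => hnx (h ▸ ha)
            omega
          have hcard : x.card = k := (hM x hx).2
          have hne : x.Nonempty := Finset.card_pos.mp (by omega)
          obtain ⟨i, hi, hsup⟩ := Finset.exists_mem_eq_sup x hne id
          refine (hzL _).mpr ⟨?_, ?_⟩
          · rw [he]; exact (Finset.erase_subset _ _).trans hsubx
          · rw [he]
            show (x.erase (x.sup id)).card = k - 1
            rw [Finset.card_erase_of_mem (by rw [hsup]; exact hi), hcard]
        · rw [hblkdef]
          exact List.mem_cons_of_mem _ ((hfibmem _ x).mpr ⟨hx, hx', rfl⟩)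
  -- nodup
  have hLnd : L.Nodup := by rw [hLdef]; exact gray_nodup _ _
  have hblknd : ∀ z ∈ L, (blk z).Nodup := by
    intro z hz
    rw [hblkdef]
    refine List.nodup_cons.mpr ⟨?_, ?_⟩
    · intro hmem
      exact ((hfibstr z _ hmem).2.1) (Finset.mem_insert_self _ _)
    · rw [hfibdef]; exact Finset.nodup_toList _
  have hfullnd : full.Nodup := by
    rw [hfulldef, List.nodup_flatMap]
    refine ⟨hblknd, ?_⟩
    refine hLnd.pairwise_of_forall_ne ?_
    intro z hz z' hz' hne a ha ha'
    rw [hblkdef] at ha ha'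
    rcases List.mem_cons.mp ha with rfl | ha
    · rcases List.mem_cons.mp ha' with h | h
      · apply hne
        have h1 : n ∉ z := hnz z hz
        have h2 : n ∉ z' := hnz z' hz'
        have := congrArg (fun s => Finset.erase s n) h
        simpa [Finset.erase_insert h1, Finset.erase_insert h2] using this
      · exact ((hfibstr z' _ h).2.1) (Finset.mem_insert_self _ _)
    · rcases List.mem_cons.mp ha' with h | h
      · exact ((hfibstr z _ ha).2.1) (h ▸ Finset.mem_insert_self _ _)
      · exact hne (((hfibstr z _ ha).2.2.2.1).symm.trans ((hfibstr z' _ h).2.2.2.1))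
  -- cross adjacency lemma
  have hcross : ∀ z z' : Finset ℕ, (z \ z').card ≤ 1 → ∀ b ∈ blk z, Adj b (insert n z') := by
    intro z z' hzz b hb
    rw [hblkdef] at hb
    rcases List.mem_cons.mp hb with rfl | hb
    · unfold Adj
      calc (insert n z \ insert n z').card ≤ (z \ z').card := by
            apply Finset.card_le_card
            intro a ha
            simp only [Finset.mem_sdiff, Finset.mem_insert, not_or] at ha ⊢
            rcases ha.1 with rfl | h
            · exact absurd rfl ha.2.1
            · exact ⟨h, ha.2.2⟩
        _ ≤ 2 := by omega
    · obtain ⟨_, _, hsup, hez, hsubb⟩ := hfibstr z b hb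
      unfold Adj
      calc (b \ insert n z').card ≤ ((z \ z') ∪ {b.sup id}).card := by
            apply Finset.card_le_card
            intro a ha
            simp only [Finset.mem_sdiff, Finset.mem_insert, not_or,
              Finset.mem_union, Finset.mem_singleton] at ha ⊢
            by_cases hs : a = b.sup id
            · exact Or.inr hs
            · refine Or.inl ⟨?_, ha.2.2⟩
              rw [← hez, he]
              exact Finset.mem_erase.mpr ⟨hs, ha.1⟩
        _ ≤ (z \ z').card + 1 := le_trans (Finset.card_union_le _ _) (by simp)
        _ ≤ 2 := by omega
  -- within-block adjacency
  have hwithin : ∀ z, ∀ a ∈ blk z, ∀ b ∈ blk z, Adj a b := by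
    intro z a ha b hb
    rw [hblkdef] at hb
    rcases List.mem_cons.mp hb with rfl | hb
    · exact hcross z z (by simp) a ha
    · obtain ⟨_, _, _, hez, hsubb⟩ := hfibstr z b hb
      rw [hblkdef] at ha
      rcases List.mem_cons.mp ha with rfl | ha
      · unfold Adj
        calc (insert n z \ b).card ≤ ({n} : Finset ℕ).card := by
              apply Finset.card_le_card
              intro c hc
              simp only [Finset.mem_sdiff, Finset.mem_insert, Finset.mem_singleton] at hc ⊢
              rcases hc.1 with rfl | h
              · rfl
              · exact absurd (hsubb (hez ▸ h)) hc.2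
          _ ≤ 2 := by simp
      · obtain ⟨_, _, hsupa, heza, hsuba⟩ := hfibstr z a ha
        unfold Adj
        calc (a \ b).card ≤ ({a.sup id} : Finset ℕ).card := by
              apply Finset.card_le_card
              intro c hc
              simp only [Finset.mem_sdiff, Finset.mem_singleton] at hc ⊢
              by_cases hs : c = a.sup id
              · exact hs
              · have : c ∈ e a := by rw [he]; exact Finset.mem_erase.mpr ⟨hs, hc.1⟩
                rw [heza, ← hez] at this
                exact absurd (hsubb this) hc.2
          _ ≤ 2 := by simp
  -- chain of full
  have hblkne : ∀ z ∈ L, blk z ≠ [] := by intro z _; rw [hblkdef]; simp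
  have hfullch : full.Chain' Adj := by
    rw [hfulldef]
    refine chain'_flatMap L blk Adj hblkne (fun z _ => (List.pairwise_of_forall_mem_list (hwithin z)).isChain) ?_
    rw [hLdef]
    refine List.IsChain.imp ?_ (gray_chain (n-1) (k-1))
    intro z z' hS x hx y hy
    rw [hblkdef] at hy
    simp only [List.head?_cons, Option.mem_def, Option.some.injEq] at hy
    subst hy
    exact hcross z z' hS.1 x hx
  -- head and last of full
  have hLne : L ≠ [] := hLdef ▸ gray_ne_nil hjm
  obtain ⟨z₀, rest, hLcons⟩ : ∃ z₀ rest, L = z₀ :: rest :=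
    List.exists_cons_of_ne_nil hLne
  have hz₀ : z₀ = Icc 1 (k-1) := by
    have := (gray_head_last (n-1) (k-1) hjm).1
    rw [← hLdef, hLcons] at this
    simpa using this
  have hfullcons : full = insert n z₀ :: (fib z₀ ++ rest.flatMap blk) := by
    rw [hfulldef, hLcons, List.flatMap_cons, hblkdef]
    simp
  have hfullne : full ≠ [] := by simp [hfullcons]
  have hfullhead : full.head hfullne = insert n z₀ := by
    have h1 : full.head? = some (insert n z₀) := by rw [hfullcons]; rfl
    have h2 : full.head? = some (full.head hfullne) := List.head?_eq_head _
    rw [h1] at h2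
    exact (Option.some_inj.mp h2).symm
  -- last of full is in blk (L.getLast)
  have hlastmem : full.getLast hfullne ∈ blk (L.getLast hLne) := by
    have h1 : full.getLast? = (blk (L.getLast hLne)).getLast? := by
      rw [hfulldef]
      exact getLast?_flatMap' L blk hLne hblkne
    have h2 : full.getLast? = some (full.getLast hfullne) := List.getLast?_eq_getLast _
    apply List.mem_of_mem_getLast?
    rw [← h1, h2]
    rfl
  have hLlast : L.getLast hLne = lastVal (n-1) (k-1) := by
    have := (gray_head_last (n-1) (k-1) hjm).2
    rw [← hLdef, List.getLast?_eq_getLast hLne] at this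
    simpa using this
  have hlastdiff : ((L.getLast hLne) \ z₀).card ≤ 1 := by
    rw [hLlast, hz₀]
    unfold lastVal
    rw [if_neg (by omega : ¬ (k-1 = 0))]
    calc (insert (n-1) (Icc 1 (k-1-1)) \ Icc 1 (k-1)).card ≤ ({n-1} : Finset ℕ).card := by
          apply Finset.card_le_card
          intro a ha
          simp only [Finset.mem_sdiff, Finset.mem_insert, Finset.mem_Icc,
            Finset.mem_singleton] at ha ⊢
          omega
      _ ≤ 1 := by simp
  have hcyc : Adj (full.getLast hfullne) (full.head hfullne) := by
    rw [hfullhead]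
    exact hcross _ z₀ hlastdiff _ hlastmem
  exact pack M full hfullne hfullnd hfullmem hfullch hcyc

end Main
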